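/- Let q be an odd prime, n ≥ 1 an integer, and a an integer coprime to q. Then (2/φ(q)) · ∑_{χ mod q, χ(-1) = -1} χ(a) τ(χ)^n = Kl_n(ā, q) - Kl_n(-ā, q), where Kl_n(b,q) = ∑_{x₁⋯x_n ≡ b mod q} e((x₁ + … + x_n)/q) is the hyper-Kloosterman sum, τ(χ) is the Gauss sum, and ā denotes the inverse of a mod q. -/

import Mathlib

open Complex Finset

/-- Gauss sum of a Dirichlet character mod `q`. -/
noncomputable def tau (q : ℕ) [NeZero q] (χ : DirichletCharacter ℂ q) : ℂ :=
  ∑ x : ZMod q, χ x * Complex.exp (2 * Real.pi * Complex.I * (x.val : ℂ) / (q : ℂ))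

/-- The hyper-Kloosterman sum `Kl_n(b, q)`. -/
noncomputable def Kloosterman (n q : ℕ) [NeZero q] (b : ZMod q) : ℂ :=
  ∑ x ∈ Finset.univ.filter (fun x : Fin n → ZMod q => ∏ i, x i = b),
    Complex.exp (2 * Real.pi * Complex.I * ((∑ i, (x i).val : ℕ) : ℂ) / (q : ℂ))

/-!
Multiplying out `τ(χ)ⁿ` gives `∑ₓ χ(x₁⋯xₙ) e((x₁ + ⋯ + xₙ)/q)` over all `n`-tuples `x`. Since
`χ(v) - χ(-v)` is `2χ(v)` for odd `χ` and `0` for even `χ`, orthogonality of all characters mod `q`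
shows that `2 ∑_{χ odd} χ(v) = φ(q) (1_{v = 1} - 1_{v = -1})`; with `v = a x₁⋯xₙ` this keeps exactly
the tuples with `x₁⋯xₙ = ±ā`, i.e. the two Kloosterman sums.
-/

theorem DirichletCharacter.two_mul_sum_odd_apply {q : ℕ} [NeZero q] (u : ZMod q) :
    2 * ∑ χ ∈ univ.filter (fun χ : DirichletCharacter ℂ q => χ (-1) = -1), χ u
      = (if u = 1 then (q.totient : ℂ) else 0) - (if u = -1 then (q.totient : ℂ) else 0) := by
  have hpair (χ : DirichletCharacter ℂ q) :
      χ u - χ (-u) = if χ (-1) = -1 then 2 * χ u else 0 := by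
    rcases χ.even_or_odd with (hχ : χ (-1) = 1) | (hχ : χ (-1) = -1)
    · rw [Even.eval_neg _ _ hχ, sub_self, hχ, if_neg (by norm_num)]
    · rw [Odd.eval_neg _ _ hχ, if_pos hχ]
      ring
  rw [mul_sum, sum_filter, ← sum_congr rfl fun χ _ => hpair χ, sum_sub_distrib,
    DirichletCharacter.sum_characters_eq, DirichletCharacter.sum_characters_eq]
  simp only [neg_eq_iff_eq_neg]

noncomputable def kloostermanPhase {n q : ℕ} (x : Fin n → ZMod q) : ℂ :=
  exp (2 * Real.pi * I * ((∑ i, (x i).val : ℕ) : ℂ) / (q : ℂ))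

section

variable {q : ℕ} [NeZero q]

theorem tau_pow_eq_sum (χ : DirichletCharacter ℂ q) (n : ℕ) :
    tau q χ ^ n = ∑ x : Fin n → ZMod q, χ (∏ i, x i) * kloostermanPhase x := by
  rw [← Fin.prod_const, tau, prod_univ_sum, Fintype.piFinset_univ]
  refine sum_congr rfl fun x _ => ?_
  rw [prod_mul_distrib, ← map_prod, kloostermanPhase, ← exp_sum, Nat.cast_sum, ← sum_div,
    ← mul_sum]

theorem kloosterman_eq_sum_ite (n : ℕ) (b : ZMod q) :
    Kloosterman n q b = ∑ x : Fin n → ZMod q, if ∏ i, x i = b then kloostermanPhase x else 0 :=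
  sum_filter _ _

theorem two_mul_sum_odd_mul_tau_pow (n : ℕ) (u : (ZMod q)ˣ) :
    2 * ∑ χ ∈ univ.filter (fun χ : DirichletCharacter ℂ q => χ (-1) = -1), χ u * tau q χ ^ n
      = q.totient * (Kloosterman n q ↑u⁻¹ - Kloosterman n q (-↑u⁻¹)) := by
  have hneg (p : ZMod q) : ↑u * p = -1 ↔ p = -↑u⁻¹ := by
    rw [← Units.eq_inv_mul_iff_mul_eq, mul_neg_one]
  calc _ = ∑ x : Fin n → ZMod q,
        (2 * ∑ χ ∈ univ.filter (fun χ : DirichletCharacter ℂ q => χ (-1) = -1),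
          χ (u * ∏ i, x i)) * kloostermanPhase x := by
        simp_rw [tau_pow_eq_sum, mul_sum, sum_mul, map_mul, mul_assoc]
        exact sum_comm
    _ = ∑ x : Fin n → ZMod q,
        ((if ∏ i, x i = ↑u⁻¹ then (q.totient : ℂ) else 0)
          - (if ∏ i, x i = -↑u⁻¹ then (q.totient : ℂ) else 0)) * kloostermanPhase x := by
        simp_rw [DirichletCharacter.two_mul_sum_odd_apply, Units.mul_eq_one_iff_inv_eq, hneg,
          eq_comm (a := (↑u⁻¹ : ZMod q))]
    _ = _ := by
        simp_rw [kloosterman_eq_sum_ite, mul_sub, mul_sum, ← sum_sub_distrib, sub_mul, ite_mul,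
          zero_mul, mul_ite, mul_zero]

end

theorem odd_char_gauss_sum_moment_general (q : ℕ) (hq : q.Prime)
    (n : ℕ) (a : ℤ) (ha : IsCoprime a (q : ℤ)) :
    haveI : NeZero q := ⟨hq.ne_zero⟩
    (2 / (Nat.totient q : ℂ))
        * ∑ χ ∈ Finset.univ.filter
            (fun χ : DirichletCharacter ℂ q => χ (-1) = -1),
          χ ((a : ZMod q)) * (tau q χ) ^ n
      = Kloosterman n q ((a : ZMod q))⁻¹ - Kloosterman n q (-((a : ZMod q))⁻¹) := by
  have : NeZero q := ⟨hq.ne_zero⟩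
  have hφ : (q.totient : ℂ) ≠ 0 := Nat.cast_ne_zero.mpr (Nat.totient_pos.mpr (NeZero.pos q)).ne'
  rw [← ZMod.coe_unitOfIsCoprime a ha, ZMod.inv_coe_unit, div_mul_eq_mul_div,
    two_mul_sum_odd_mul_tau_pow, mul_div_cancel_left₀ _ hφ]

theorem odd_char_gauss_sum_moment (q : ℕ) (hq : q.Prime) (hq2 : Odd q)
    (n : ℕ) (hn : 1 ≤ n) (a : ℤ) (ha : IsCoprime a (q : ℤ)) :
    haveI : NeZero q := ⟨hq.ne_zero⟩
    (2 / (Nat.totient q : ℂ))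
        * ∑ χ ∈ Finset.univ.filter
            (fun χ : DirichletCharacter ℂ q => χ (-1) = -1),
          χ ((a : ZMod q)) * (tau q χ) ^ n
      = Kloosterman n q ((a : ZMod q))⁻¹ - Kloosterman n q (-((a : ZMod q))⁻¹) :=
  odd_char_gauss_sum_moment_general q hq n a ha
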